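/- For a finite cyclic group $G$, the augmentation ideal $IG$ and its dual lattice $IG^* = \mathrm{Hom}_{\mathbb{Z}}(IG, \mathbb{Z})$ are isomorphic as $\mathbb{Z}G$-modules. -/

import Mathlib

/-- The augmentation map `ℤ[G] → ℤ`, sending each group element to `1`. -/
noncomputable def augmentationMap (G : Type*) [Group G] :
    MonoidAlgebra ℤ G →ₐ[ℤ] ℤ :=
  MonoidAlgebra.lift ℤ ℤ G 1

/-- The augmentation ideal `IG`, the kernel of the augmentation map, viewed as a
`ℤ`-submodule of `ℤ[G]`. -/
noncomputable def augmentationIdeal (G : Type*) [Group G] :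
    Submodule ℤ (MonoidAlgebra ℤ G) :=
  LinearMap.ker (augmentationMap G).toLinearMap

/-!
Let `σ` generate `G` and let `⟨x, y⟩ = ∑ γ, x γ * y γ` be the pairing on `ℤ[G]` for which `G` is
orthonormal, so that `⟨g x, y⟩ = ⟨x, g⁻¹ y⟩`. Left multiplication by `σ - 1` maps `ℤ[G]` onto
`IG`, and `x ↦ ⟨x, -⟩` maps `ℤ[G]` onto `IG*` because `IG` is free on the `γ - 1`, `γ ≠ 1`.
Both maps are `G`-equivariant and both kernels are the multiples of the norm element
`N = ∑ γ, γ`, so they induce the required isomorphism `IG ≅ ℤ[G]/ℤN ≅ IG*`.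
-/

open MonoidAlgebra Finsupp

theorem LinearMap.exists_linearEquiv_comp_eq_of_ker_eq {R M N P : Type*} [Ring R]
    [AddCommGroup M] [AddCommGroup N] [AddCommGroup P] [Module R M] [Module R N] [Module R P]
    (f : M →ₗ[R] N) (g : M →ₗ[R] P) (hf : Function.Surjective f) (hg : Function.Surjective g)
    (h : LinearMap.ker f = LinearMap.ker g) : ∃ e : N ≃ₗ[R] P, ∀ m, e (f m) = g m := by
  refine ⟨(f.quotKerEquivOfSurjective hf).symm ≪≫ₗ Submodule.quotEquivOfEq _ _ h ≪≫ₗ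
    g.quotKerEquivOfSurjective hg, fun m => ?_⟩
  have hm : (f.quotKerEquivOfSurjective hf).symm (f m) = Submodule.Quotient.mk m :=
    (LinearEquiv.symm_apply_eq _).mpr rfl
  rw [LinearEquiv.trans_apply, LinearEquiv.trans_apply, hm]
  rfl

section Augmentation

variable {G : Type*} [Group G]

theorem of_sub_one_mem_augmentationIdeal (g : G) : of ℤ G g - 1 ∈ augmentationIdeal G := by
  simp [augmentationIdeal, augmentationMap]

theorem mul_mem_augmentationIdeal {x : ℤ[G]} (hx : x ∈ augmentationIdeal G) (y : ℤ[G]) :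
    x * y ∈ augmentationIdeal G := by
  simp_all [augmentationIdeal]

variable [Fintype G]

theorem augmentationMap_apply (x : ℤ[G]) : augmentationMap G x = ∑ γ, x.coeff γ := by
  induction x using MonoidAlgebra.induction_linear with
  | zero => simp
  | add x y hx hy => simp [hx, hy, Finset.sum_add_distrib]
  | single g r => simp [augmentationMap]

theorem mem_augmentationIdeal_iff {x : ℤ[G]} :
    x ∈ augmentationIdeal G ↔ ∑ γ, x.coeff γ = 0 := by
  rw [augmentationIdeal, LinearMap.mem_ker, AlgHom.toLinearMap_apply, augmentationMap_apply]

theorem augmentationIdeal_eq_ker_linearCombination :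
    augmentationIdeal G = LinearMap.ker
      (linearCombination ℤ (fun _ => (1 : ℤ)) ∘ₗ (coeffLinearEquiv ℤ).toLinearMap) := by
  ext x
  simp [mem_augmentationIdeal_iff, linearCombination_apply, Finsupp.sum_fintype]

theorem sum_coeff_smul_of_sub_one {z : ℤ[G]} (hz : z ∈ augmentationIdeal G) :
    ∑ γ, z.coeff γ • (of ℤ G γ - 1) = z := by
  rw [mem_augmentationIdeal_iff] at hz
  simp only [smul_sub, Finset.sum_sub_distrib, ← Finset.sum_smul, hz, zero_smul, sub_zero]
  conv_rhs => rw [← sum_coeff_single z]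
  simp [Finsupp.sum_fintype, of_apply]

end Augmentation

section Duality

noncomputable def coeffPairing {M : Type*} [Fintype M] : ℤ[M] →ₗ[ℤ] ℤ[M] →ₗ[ℤ] ℤ :=
  (dotProductBilin ℤ ℤ).compl₁₂ (lcoeFun ∘ₗ (coeffLinearEquiv ℤ).toLinearMap)
    (lcoeFun ∘ₗ (coeffLinearEquiv ℤ).toLinearMap)

theorem coeffPairing_apply {M : Type*} [Fintype M] (x y : ℤ[M]) :
    coeffPairing x y = ∑ γ, x.coeff γ * y.coeff γ :=
  rfl

variable {G : Type*} [Group G] [Fintype G]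

theorem coeffPairing_of_mul (g : G) (x y : ℤ[G]) :
    coeffPairing (of ℤ G g * x) y = coeffPairing x (of ℤ G g⁻¹ * y) := by
  simp only [coeffPairing_apply, of_apply, coeff_single_mul_apply, one_mul, inv_inv]
  exact Fintype.sum_equiv (Equiv.mulLeft g⁻¹) _ _ fun γ => by simp

theorem coeffPairing_of_sub_one (x : ℤ[G]) (g : G) :
    coeffPairing x (of ℤ G g - 1) = x.coeff g - x.coeff 1 := by
  classical
  simp [coeffPairing_apply, mul_sub, Finset.sum_sub_distrib, one_def, Finsupp.single_apply]

noncomputable def toDualAugmentationIdeal : ℤ[G] →ₗ[ℤ] Module.Dual ℤ (augmentationIdeal G) :=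
  coeffPairing.compl₂ (augmentationIdeal G).subtype

theorem toDualAugmentationIdeal_apply (x : ℤ[G]) (z : augmentationIdeal G) :
    toDualAugmentationIdeal x z = coeffPairing x z :=
  rfl

theorem toDualAugmentationIdeal_eq_zero_iff {x : ℤ[G]} :
    toDualAugmentationIdeal x = 0 ↔ ∀ γ, x.coeff γ = x.coeff 1 := by
  refine ⟨fun hx γ => ?_, fun hx => ?_⟩
  · have := LinearMap.congr_fun hx ⟨_, of_sub_one_mem_augmentationIdeal γ⟩
    rwa [toDualAugmentationIdeal_apply, coeffPairing_of_sub_one, LinearMap.zero_apply,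
      sub_eq_zero] at this
  · ext z
    simp [toDualAugmentationIdeal_apply, coeffPairing_apply, hx, ← Finset.mul_sum,
      mem_augmentationIdeal_iff.mp z.2]

theorem toDualAugmentationIdeal_surjective :
    Function.Surjective (toDualAugmentationIdeal (G := G)) := by
  classical
  intro φ
  set c : G → ℤ := fun γ => φ ⟨_, of_sub_one_mem_augmentationIdeal γ⟩
  refine ⟨∑ γ, c γ • of ℤ G γ, ?_⟩
  ext z
  have hcoeff (δ : G) : (∑ γ, c γ • of ℤ G γ).coeff δ = c δ := by
    simp [of_apply, Finsupp.single_apply]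
  have hz : z = ∑ γ, (z : ℤ[G]).coeff γ • ⟨_, of_sub_one_mem_augmentationIdeal γ⟩ := by
    ext1
    simp only [Submodule.coe_sum, Submodule.coe_smul]
    exact (sum_coeff_smul_of_sub_one z.2).symm
  calc toDualAugmentationIdeal (∑ γ, c γ • of ℤ G γ) z = ∑ γ, (z : ℤ[G]).coeff γ * c γ := by
        simp only [toDualAugmentationIdeal_apply, coeffPairing_apply, hcoeff, mul_comm]
    _ = φ z := by
        conv_rhs => rw [hz, map_sum]
        simp only [map_smul, smul_eq_mul, c]

end Duality

section Cyclic

variable {G : Type*} [Group G]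

theorem mulLeft_of_sub_one_eq_leftRegular_sub_id (σ : G) :
    LinearMap.mulLeft ℤ (of ℤ G σ - 1) = Representation.leftRegular ℤ G σ - LinearMap.id := by
  ext y : 1
  ext γ
  simp [sub_mul, of_apply]

noncomputable def mulOfSubOne (σ : G) : ℤ[G] →ₗ[ℤ] augmentationIdeal G :=
  (LinearMap.mulLeft ℤ (of ℤ G σ - 1)).codRestrict _
    (mul_mem_augmentationIdeal (of_sub_one_mem_augmentationIdeal σ))

theorem coe_mulOfSubOne (σ : G) (y : ℤ[G]) : (mulOfSubOne σ y : ℤ[G]) = (of ℤ G σ - 1) * y :=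
  rfl

variable {σ : G} (hσ : ∀ g, g ∈ Subgroup.zpowers σ)
include hσ

theorem mulOfSubOne_of_mul (g : G) (y : ℤ[G]) :
    (mulOfSubOne σ (of ℤ G g * y) : ℤ[G]) = of ℤ G g * mulOfSubOne σ y := by
  obtain ⟨k, rfl⟩ := hσ g
  have hcomm : Commute (of ℤ G (σ ^ k)) (of ℤ G σ - 1) :=
    (((Commute.refl σ).zpow_left k).map (of ℤ G)).sub_right (Commute.one_right _)
  rw [coe_mulOfSubOne, coe_mulOfSubOne, ← mul_assoc, ← mul_assoc, hcomm.eq]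

theorem mulOfSubOne_eq_zero_iff {y : ℤ[G]} :
    mulOfSubOne σ y = 0 ↔ ∀ γ, y.coeff γ = y.coeff 1 := by
  have hfix : mulOfSubOne σ y = 0 ↔ Representation.leftRegular ℤ G σ y = y := by
    rw [← Submodule.coe_eq_zero, coe_mulOfSubOne, ← LinearMap.mulLeft_apply (R := ℤ),
      mulLeft_of_sub_one_eq_leftRegular_sub_id, LinearMap.sub_apply, LinearMap.id_apply, sub_eq_zero]
  rw [hfix]
  refine ⟨fun h γ => ?_, fun h => ?_⟩
  · rw [Representation.coeff_of_leftRegular_of_generator σ hσ y h γ,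
      Representation.coeff_of_leftRegular_of_generator σ hσ y h 1]
  · ext γ
    simp [h]

theorem mulOfSubOne_surjective [Fintype G] : Function.Surjective (mulOfSubOne σ) := by
  have hrange : LinearMap.range (LinearMap.mulLeft ℤ (of ℤ G σ - 1)) = augmentationIdeal G := by
    rw [mulLeft_of_sub_one_eq_leftRegular_sub_id, ← Representation.FiniteCyclicGroup.coinvariantsKer_eq_range _ _ hσ,
      Representation.FiniteCyclicGroup.coinvariantsKer_leftRegular_eq_ker,
      augmentationIdeal_eq_ker_linearCombination]
  rintro ⟨z, hz⟩
  obtain ⟨y, hy⟩ := hrange ▸ hz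
  exact ⟨y, Subtype.ext hy⟩

end Cyclic

/-- for a finite cyclic group `G`, the augmentation ideal `IG` and its dual
lattice `IG* = Hom_ℤ(IG, ℤ)` are isomorphic as `ℤG`-modules, where `G` acts on `IG` by
(left) multiplication and on `IG*` by the contragredient action
`(g ⬝ φ)(x) = φ(g⁻¹ ⬝ x)`. -/
theorem augmentationIdeal_self_dual (G : Type*) [Group G] [Fintype G] [IsCyclic G] :
    ∃ e : augmentationIdeal G ≃ₗ[ℤ] Module.Dual ℤ (augmentationIdeal G),
      ∀ (g : G) (x y : augmentationIdeal G)
        (hgx : MonoidAlgebra.of ℤ G g * (x : MonoidAlgebra ℤ G) ∈ augmentationIdeal G)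
        (hgy : MonoidAlgebra.of ℤ G g⁻¹ * (y : MonoidAlgebra ℤ G) ∈ augmentationIdeal G),
        e ⟨_, hgx⟩ y = e x ⟨_, hgy⟩ := by
  obtain ⟨σ, hσ⟩ := IsCyclic.exists_generator (α := G)
  have hker : LinearMap.ker (mulOfSubOne σ) = LinearMap.ker toDualAugmentationIdeal := by
    ext y
    rw [LinearMap.mem_ker, LinearMap.mem_ker, mulOfSubOne_eq_zero_iff hσ,
      toDualAugmentationIdeal_eq_zero_iff]
  obtain ⟨e, he⟩ := LinearMap.exists_linearEquiv_comp_eq_of_ker_eq _ _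
    (mulOfSubOne_surjective hσ) toDualAugmentationIdeal_surjective hker
  refine ⟨e, fun g x y hgx hgy => ?_⟩
  obtain ⟨x, rfl⟩ := mulOfSubOne_surjective hσ x
  have hgx' : (⟨_, hgx⟩ : augmentationIdeal G) = mulOfSubOne σ (of ℤ G g * x) :=
    Subtype.ext (mulOfSubOne_of_mul hσ g x).symm
  rw [hgx', he, he, toDualAugmentationIdeal_apply, toDualAugmentationIdeal_apply,
    coeffPairing_of_mul]
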